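/- arXiv:2012.05260 — 2 statements merged into one kernel-verified Lean document; each statement's English description precedes it below -/
import Mathlib

section
/- Fix l ≥ 1 and model the qubits of the toric code on an l × l torus as E = Fin l × Fin l × Fin 2 (edge (r,c,0) is the horizontal edge at row r, column c; edge (r,c,1) is the vertical edge at row r, column c), with Z-type operators identified with functions E → ZMod 2. For (r,c) ∈ Fin l × Fin l let F(r,c) : E → ZMod 2 be the indicator of the plaquette {(r,c,0), (r+1,c,0), (r,c,1), (r,c+1,1)} (row and column indices taken mod l), and let P be the ZMod 2-submodule of (E → ZMod 2) spanned by all F(r,c). For r ∈ Fin l let L_r : E → ZMod 2 be the indicator of the horizontal loop {(r,c,0) | c ∈ Fin l}. Then: (i) for all r, r′ ∈ Fin l, L_r + L_{r′} ∈ P (all horizontal loops represent the same logical Pauli class modulo the plaquette stabilisers), and (ii) for r ≠ r′ the supports of L_r and L_{r′} are disjoint. Consequently this logical Pauli class of the toric code has at least l pairwise disjoint representatives, so its 1-disjointness is at least l. -/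
/-- The plaquette stabiliser of the toric code on an `l × l` torus, as a `ZMod 2`-valued
function on the edge set `Fin l × Fin l × Fin 2`: the indicator of
`{(r,c,0), (r+1,c,0), (r,c,1), (r,c+1,1)}` (indices mod `l`). -/
def plaquette (l : ℕ) [NeZero l] (r c : Fin l) : Fin l × Fin l × Fin 2 → ZMod 2 :=
  fun e =>
    if e = (r, c, (0 : Fin 2)) ∨ e = (r + 1, c, (0 : Fin 2)) ∨
        e = (r, c, (1 : Fin 2)) ∨ e = (r, c + 1, (1 : Fin 2)) then 1 else 0

/-- The horizontal loop logical operator at row `r` of the toric code: the indicator of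
`{(r, c, 0) | c ∈ Fin l}`. -/
def hLoop (l : ℕ) [NeZero l] (r : Fin l) : Fin l × Fin l × Fin 2 → ZMod 2 :=
  fun e => if e.1 = r ∧ e.2.2 = (0 : Fin 2) then 1 else 0

lemma sum_plaquette (l : ℕ) [NeZero l] (hl : 2 ≤ l) (r : Fin l) :
    ∑ c : Fin l, plaquette l r c = hLoop l r + hLoop l (r + 1) := by
  have hne : r ≠ r + 1 := by
    intro h
    have : (0 : Fin l) = 1 := by
      have := add_left_cancel (a := r) (b := 0) (c := 1) (by simpa using h)
      simpa using this
    have := congrArg Fin.val this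
    simp [Fin.val_one, Nat.mod_eq_of_lt hl] at this
  have hl1 : l ≠ 1 := by omega
  funext e
  obtain ⟨a, b, i⟩ := e
  simp only [Finset.sum_apply, plaquette, hLoop, Pi.add_apply, Prod.mk.injEq]
  fin_cases i
  · by_cases h1 : a = r
    · by_cases h2 : a = r + 1
      · exact absurd (h1 ▸ h2) hne
      · simp [h1, h2, hl1, Finset.sum_ite_eq]
    · by_cases h2 : a = r + 1
      · simp [h1, h2, hl1, Finset.sum_ite_eq]
      · simp [h1, h2]
  · by_cases h1 : a = r
    · simp only [h1, true_and, Fin.isValue]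
      have hone : ((1:Fin 2) = 0) = False := by simp
      simp only [Fin.mk_one, Fin.mk_zero, hone, and_false, false_and, false_or, and_true,
        if_false, or_false]
      have hsplit : ∀ x : Fin l,
          (if b = x ∨ b = x + 1 then (1:ZMod 2) else 0)
          = (if b = x then 1 else 0) + (if b = x + 1 then 1 else 0) := by
        intro x
        have hx : x ≠ x + 1 := by
          intro h
          have : (0 : Fin l) = 1 := by
            have := add_left_cancel (a := x) (b := 0) (c := 1) (by simpa using h)
            simpa using this
          have := congrArg Fin.val this
          simp [Fin.val_one, Nat.mod_eq_of_lt hl] at this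
        by_cases hb1 : b = x <;> by_cases hb2 : b = x + 1 <;>
          simp_all
      rw [Finset.sum_congr rfl fun x _ => hsplit x, Finset.sum_add_distrib]
      have h2 : ∑ x : Fin l, (if b = x + 1 then (1:ZMod 2) else 0)
          = ∑ x : Fin l, (if b = x then 1 else 0) :=
        Fintype.sum_equiv (Equiv.addRight (1:Fin l)) _ _ (fun x => rfl)
      rw [h2]
      simp [Finset.sum_ite_eq, hne]
      decide
    · simp [h1]

lemma hLoop_add_self (l : ℕ) [NeZero l] (f : Fin l × Fin l × Fin 2 → ZMod 2) :
    f + f = 0 := by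
  funext e
  exact CharTwo.add_self_eq_zero _

open Fin.NatCast in
lemma hLoop_zero_add_mem (l : ℕ) [NeZero l] (r : Fin l) :
    hLoop l 0 + hLoop l r ∈
      Submodule.span (ZMod 2) {v | ∃ r₀ c₀ : Fin l, v = plaquette l r₀ c₀} := by
  by_cases hl2 : 2 ≤ l
  · have key : ∀ n : ℕ, hLoop l 0 + hLoop l (n : Fin l) ∈
        Submodule.span (ZMod 2) {v | ∃ r₀ c₀ : Fin l, v = plaquette l r₀ c₀} := by
      intro n
      induction n with
      | zero =>
          simp only [Nat.cast_zero, hLoop_add_self]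
          exact Submodule.zero_mem _
      | succ n ih =>
          have hstep : hLoop l (n : Fin l) + hLoop l ((n : Fin l) + 1) ∈
              Submodule.span (ZMod 2) {v | ∃ r₀ c₀ : Fin l, v = plaquette l r₀ c₀} := by
            rw [← sum_plaquette l hl2 (n : Fin l)]
            exact Submodule.sum_mem _ fun c _ =>
              Submodule.subset_span ⟨(n : Fin l), c, rfl⟩
          have hcast : ((n + 1 : ℕ) : Fin l) = (n : Fin l) + 1 := by
            push_cast
            ring
          rw [hcast]
          have : hLoop l 0 + hLoop l ((n : Fin l) + 1)
              = (hLoop l 0 + hLoop l (n : Fin l))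
                + (hLoop l (n : Fin l) + hLoop l ((n : Fin l) + 1)) := by
            rw [show (hLoop l 0 + hLoop l (n : Fin l))
                + (hLoop l (n : Fin l) + hLoop l ((n : Fin l) + 1))
              = hLoop l 0 + (hLoop l (n : Fin l) + hLoop l (n : Fin l))
                + hLoop l ((n : Fin l) + 1) by ring, hLoop_add_self, add_zero]
          rw [this]
          exact Submodule.add_mem _ ih hstep
    have := key r.val
    rwa [Fin.cast_val_eq_self] at this
  · have hl1 : l = 1 := by
      have := Nat.pos_of_ne_zero (NeZero.ne l)
      omega
    have : r = 0 := by
      subst hl1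
      exact Subsingleton.elim r 0
    rw [this, hLoop_add_self]
    exact Submodule.zero_mem _

lemma hLoop_disjoint (l : ℕ) [NeZero l] {r r' : Fin l} (h : r ≠ r') :
    Disjoint (Function.support (hLoop l r)) (Function.support (hLoop l r')) := by
  rw [Set.disjoint_left]
  intro e he he'
  simp only [Function.mem_support, hLoop, ne_eq, ite_eq_right_iff, not_forall] at he he'
  exact h (he.1.1 ▸ he'.1.1 ▸ rfl)

/-- in the toric code on an `l × l` torus (with `P` the submodule
spanned by the plaquette stabilisers): (i) any two horizontal loops `L_r, L_{r'}`
represent the same logical Pauli class (`L_r + L_{r'} ∈ P`); (ii) distinct horizontal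
loops have disjoint supports; consequently this logical Pauli class has at least `l`
pairwise disjoint representatives, so its `1`-disjointness is at least `l`. -/
theorem toric_code_disjoint_loops (l : ℕ) [NeZero l] (hl : 1 ≤ l) :
    (∀ r r' : Fin l,
        hLoop l r + hLoop l r' ∈
          Submodule.span (ZMod 2) {v | ∃ r₀ c₀ : Fin l, v = plaquette l r₀ c₀}) ∧
    (∀ r r' : Fin l, r ≠ r' →
        Disjoint (Function.support (hLoop l r)) (Function.support (hLoop l r'))) ∧
    (∃ g : Fin l → (Fin l × Fin l × Fin 2 → ZMod 2),
        (∀ r : Fin l,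
          g r + hLoop l 0 ∈
            Submodule.span (ZMod 2) {v | ∃ r₀ c₀ : Fin l, v = plaquette l r₀ c₀}) ∧
        (∀ r r' : Fin l, r ≠ r' →
          Disjoint (Function.support (g r)) (Function.support (g r')))) := by
  have hmem : ∀ r r' : Fin l,
      hLoop l r + hLoop l r' ∈
        Submodule.span (ZMod 2) {v | ∃ r₀ c₀ : Fin l, v = plaquette l r₀ c₀} := by
    intro r r'
    have h1 := hLoop_zero_add_mem l r
    have h2 := hLoop_zero_add_mem l r'
    have := Submodule.add_mem _ h1 h2
    have heq : (hLoop l 0 + hLoop l r) + (hLoop l 0 + hLoop l r')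
        = hLoop l r + hLoop l r' := by
      rw [show (hLoop l 0 + hLoop l r) + (hLoop l 0 + hLoop l r')
          = (hLoop l 0 + hLoop l 0) + (hLoop l r + hLoop l r') by ring,
        hLoop_add_self, zero_add]
    rwa [heq] at this
  refine ⟨hmem, fun r r' h => hLoop_disjoint l h, hLoop l, fun r => hmem r 0,
    fun r r' h => hLoop_disjoint l h⟩
end

section
/- Let d ≥ 2 and let W be a ℂ-subspace of ℂ^d with W ≠ 0 and W ≠ ℂ^d. Then the set of unitary d × d matrices U (elements of Matrix.unitaryGroup (Fin d) ℂ) that map W into itself is not dense in the unitary group. (This is the final step in the proof of Lemma 3: a group of logical operators all of which preserve the nontrivial proper subspace stabilised by the logical Pauli operators in P↓ cannot be universal, so an asymmetric stabiliser code family is B-constrained.) -/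
open Matrix

/-- final step in the proof of Lemma 3: if `W` is a nonzero proper
subspace of `ℂ^d` (`d ≥ 2`), the set of unitaries mapping `W` into itself is not dense
in the unitary group; hence a group of logical operators preserving the subspace
stabilised by the logical Paulis in `P↓` cannot be universal. -/
theorem invariant_subspace_not_dense (d : ℕ) (hd : 2 ≤ d)
    (W : Submodule ℂ (Fin d → ℂ)) (hW0 : W ≠ ⊥) (hWtop : W ≠ ⊤) :
    ¬ Dense {U : Matrix.unitaryGroup (Fin d) ℂ |
        ∀ v ∈ W, Matrix.mulVec (U : Matrix (Fin d) (Fin d) ℂ) v ∈ W} := by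
  classical
  set E := EuclideanSpace ℂ (Fin d) with hE
  let L : E ≃ₗ[ℂ] (Fin d → ℂ) := WithLp.linearEquiv 2 ℂ (Fin d → ℂ)
  let W' : Submodule ℂ E := W.comap (L : E →ₗ[ℂ] (Fin d → ℂ))
  have hW'0 : W' ≠ ⊥ := by
    intro h
    apply hW0
    rw [Submodule.eq_bot_iff] at h ⊢
    intro x hx
    have := h (L.symm x) (by simpa [W'] using hx)
    simpa using congrArg L this
  have hW'top : W' ≠ ⊤ := by
    intro h
    apply hWtop
    rw [Submodule.eq_top_iff'] at h ⊢
    intro x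
    simpa [W'] using h (L.symm x)
  -- a unit vector in W'
  obtain ⟨w, hwW, hw0⟩ := Submodule.exists_mem_ne_zero_of_ne_bot hW'0
  set w₀ : E := (‖w‖ : ℂ)⁻¹ • w with hw₀def
  have hw₀W : w₀ ∈ W' := W'.smul_mem _ hwW
  have hw₀norm : ‖w₀‖ = 1 := by
    have : ‖w‖ ≠ 0 := norm_ne_zero_iff.mpr hw0
    simp [hw₀def, norm_smul, this, abs_norm]
    rw [abs_of_nonneg (norm_nonneg _)]; exact inv_mul_cancel₀ this
  -- a unit vector in W'ᗮ
  have hWo : W'ᗮ ≠ ⊥ := fun h => hW'top (Submodule.orthogonal_eq_bot_iff.mp h)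
  obtain ⟨z, hzW, hz0⟩ := Submodule.exists_mem_ne_zero_of_ne_bot hWo
  set u : E := (‖z‖ : ℂ)⁻¹ • z with hudef
  have huW : u ∈ W'ᗮ := W'ᗮ.smul_mem _ hzW
  have hunorm : ‖u‖ = 1 := by
    have : ‖z‖ ≠ 0 := norm_ne_zero_iff.mpr hz0
    simp [hudef, norm_smul, this, abs_norm]
    rw [abs_of_nonneg (by positivity)]; exact inv_mul_cancel₀ this
  have huNotW : u ∉ W' := by
    intro hu
    have : u = 0 := by
      have := Submodule.inner_right_of_mem_orthogonal hu huW
      exact inner_self_eq_zero.mp this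
    rw [this] at hunorm; exact zero_ne_one ((norm_eq_zero.mpr rfl).symm.trans hunorm)
  -- indices
  haveI : NeZero d := ⟨by omega⟩
  have h01 : (0 : Fin d) ≠ 1 := by
    have : (1 : Fin d).val = 1 := by
      simp [Fin.val_one, Nat.mod_eq_of_lt (by omega : 1 < d)]
    intro h
    have := congrArg Fin.val h
    simp [this] at *
    omega
  -- an orthonormal basis with b 0 = w₀ and b 1 = u
  let v : Fin d → E := fun i => if i = 0 then w₀ else u
  have hvo : Orthonormal ℂ (({0, 1} : Set (Fin d)).restrict v) := by
    constructor
    · rintro ⟨i, hi⟩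
      simp only [Set.mem_insert_iff, Set.mem_singleton_iff] at hi
      rcases hi with rfl | rfl
      · simpa [v, Set.restrict] using hw₀norm
      · simpa [v, h01.symm, Set.restrict] using hunorm
    · rintro ⟨i, hi⟩ ⟨j, hj⟩ hne
      have hij : i ≠ j := fun h => hne (by simp [Subtype.ext_iff, h])
      simp only [Set.mem_insert_iff, Set.mem_singleton_iff] at hi hj
      rcases hi with rfl | rfl <;> rcases hj with rfl | rfl
      · exact absurd rfl hij
      · simpa [v, h01.symm, Set.restrict] using
          Submodule.inner_right_of_mem_orthogonal hw₀W huW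
      · simpa [v, h01.symm, Set.restrict] using
          Submodule.inner_left_of_mem_orthogonal hw₀W huW
      · exact absurd rfl hij
  have hcard : Module.finrank ℂ E = Fintype.card (Fin d) := by
    show Module.finrank ℂ (EuclideanSpace ℂ (Fin d)) = _; rw [finrank_euclideanSpace_fin, Fintype.card_fin]
  obtain ⟨b, hb⟩ := hvo.exists_orthonormalBasis_extension_of_card_eq hcard
  have hb0 : b 0 = w₀ := by simpa [v] using hb 0 (by simp)
  have hb1 : b 1 = u := by simpa [v, h01.symm] using hb 1 (by simp)
  -- the unitary matrices
  let a := EuclideanSpace.basisFun (Fin d) ℂ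
  let B₁ : Matrix (Fin d) (Fin d) ℂ := a.toBasis.toMatrix ⇑b
  let B₂ : Matrix (Fin d) (Fin d) ℂ :=
    a.toBasis.toMatrix ⇑(b.reindex (Equiv.swap (0 : Fin d) 1))
  have hB₁ : B₁ ∈ Matrix.unitaryGroup (Fin d) ℂ :=
    a.toMatrix_orthonormalBasis_mem_unitary b
  have hB₂ : B₂ ∈ Matrix.unitaryGroup (Fin d) ℂ :=
    a.toMatrix_orthonormalBasis_mem_unitary (b.reindex (Equiv.swap (0 : Fin d) 1))
  have hAmem : B₂ * star B₁ ∈ Matrix.unitaryGroup (Fin d) ℂ :=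
    mul_mem hB₂ (Unitary.star_mem hB₁)
  -- entries of B₁, B₂ : columns are the basis vectors
  have hB₁entry : ∀ i j, B₁ i j = b j i := by
    intro i j
    simp [B₁, Module.Basis.toMatrix_apply, a, OrthonormalBasis.coe_toBasis_repr_apply,
      EuclideanSpace.basisFun_repr]
  have hB₂entry : ∀ i j, B₂ i j = b (Equiv.swap (0 : Fin d) 1 j) i := by
    intro i j
    simp [B₂, Module.Basis.toMatrix_apply, a, OrthonormalBasis.coe_toBasis_repr_apply,
      EuclideanSpace.basisFun_repr, OrthonormalBasis.reindex_apply]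
  -- the key computation : (B₂ * star B₁) *ᵥ w₀ = u  (as bare functions)
  let w₀f : Fin d → ℂ := L w₀
  let uf : Fin d → ℂ := L u
  have hLapp : ∀ (x : E) (i : Fin d), L x i = x i := fun _ _ => rfl
  have hB₁col : B₁ *ᵥ Pi.single (0 : Fin d) 1 = w₀f := by
    funext i
    simp [Matrix.mulVec_single, hB₁entry, hb0, w₀f, hLapp]
  have hstarB₁ : star B₁ *ᵥ w₀f = Pi.single (0 : Fin d) 1 := by
    rw [← hB₁col, Matrix.mulVec_mulVec]
    have : star B₁ * B₁ = 1 := hB₁.1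
    rw [this, Matrix.one_mulVec]
  have hkey : (B₂ * star B₁) *ᵥ w₀f = uf := by
    rw [← Matrix.mulVec_mulVec, hstarB₁]
    funext i
    simp [Matrix.mulVec_single, hB₂entry, hb1, uf, hLapp]
  -- the whole set is contained in a closed set not containing our unitary
  intro hdense
  set S := {U : Matrix.unitaryGroup (Fin d) ℂ |
      ∀ v ∈ W, Matrix.mulVec (U : Matrix (Fin d) (Fin d) ℂ) v ∈ W}
  let U₀ : Matrix.unitaryGroup (Fin d) ℂ := ⟨B₂ * star B₁, hAmem⟩
  have hw₀fW : w₀f ∈ W := hw₀W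
  have hcont : Continuous fun U : Matrix.unitaryGroup (Fin d) ℂ =>
      ((U : Matrix (Fin d) (Fin d) ℂ) *ᵥ w₀f) := by
    have hg : Continuous fun M : Matrix (Fin d) (Fin d) ℂ => M *ᵥ w₀f := by
      refine continuous_pi fun i => ?_
      simp only [Matrix.mulVec, dotProduct]
      exact continuous_finset_sum _ fun j _ =>
        ((((continuous_apply j).comp (continuous_apply i) : Continuous fun a : Matrix (Fin d) (Fin d) ℂ => a i j)).mul continuous_const)
    exact hg.comp continuous_subtype_val
  have hclosed : IsClosed {U : Matrix.unitaryGroup (Fin d) ℂ |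
      (U : Matrix (Fin d) (Fin d) ℂ) *ᵥ w₀f ∈ W} :=
    IsClosed.preimage hcont (Submodule.closed_of_finiteDimensional W)
  have hsub : S ⊆ {U : Matrix.unitaryGroup (Fin d) ℂ |
      (U : Matrix (Fin d) (Fin d) ℂ) *ᵥ w₀f ∈ W} := fun U hU => hU w₀f hw₀fW
  have hU₀ : U₀ ∈ closure S := hdense U₀
  have : (U₀ : Matrix (Fin d) (Fin d) ℂ) *ᵥ w₀f ∈ W :=
    closure_minimal hsub hclosed hU₀
  rw [show ((U₀ : Matrix (Fin d) (Fin d) ℂ)) = B₂ * star B₁ from rfl, hkey] at this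
  exact huNotW this
end
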